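/- Let d ≥ 1 and let Ψ̃ be the rank-one matrix indexed by Fin d × Fin d with entries Ψ̃[(s,t),(s',t')] = [s = t]·[s' = t'] (the unnormalized maximally entangled projector |Σ_s ss⟩⟨Σ_s ss|). Let c be the 3-cycle (0 1 2) of Fin 3, and let R be the reindexed 3-fold Kronecker power Ψ̃^{⊗3}, a matrix on (Fin 3 → Fin d) × (Fin 3 → Fin d). Then for i, j ∈ {c, c⁻¹}: Tr[(W_i ⊗ W_j) · R] = d³ if i = j, and Tr[(W_i ⊗ W_j) · R] = d if i ≠ j. (Paper's Eq. (WAWBbell): the maximally entangled state breaks the symmetry between equal and opposite cyclic permutations on the two subsystems.) -/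

import Mathlib

open Matrix Kronecker

noncomputable section

/-- Permutation operator `W_π` of local index `I`: `W_π[b,a] = 1` iff `b = a ∘ π`. -/
def permOp (I : Type*) [DecidableEq I] {t : ℕ} (π : Equiv.Perm (Fin t)) :
    Matrix (Fin t → I) (Fin t → I) ℂ :=
  Matrix.of fun b a => if b = a ∘ ⇑π then 1 else 0

/-- `t`-fold Kronecker power of a matrix. -/
def kpow {I : Type*} (M : Matrix I I ℂ) (t : ℕ) :
    Matrix (Fin t → I) (Fin t → I) ℂ :=
  Matrix.of fun a b => ∏ i, M (a i) (b i)

/-- the 3-cycle (0 1 2) of `Fin 3` -/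
def c3 : Equiv.Perm (Fin 3) := finRotate 3

/-- The unnormalized maximally entangled projector `|Σ_s ss⟩⟨Σ_s ss|`. -/
def psiTilde (d : ℕ) : Matrix (Fin d × Fin d) (Fin d × Fin d) ℂ :=
  Matrix.of fun p q =>
    (if p.1 = p.2 then 1 else 0) * (if q.1 = q.2 then 1 else 0)

/-!
The `t`-fold tensor power of `Ψ̃` is again the rank-one projector onto `Σ_a |a a⟩`, now with `a`
ranging over `Fin t → Fin d`, and for such a projector `Tr[(A ⊗ B) Ψ̃] = Tr[Aᵀ B]`. Since
`W_πᵀ = W_π⁻¹` and `W_σ W_τ = W_{τσ}`, the trace in question is `Tr W_{j i⁻¹}`, which counts the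
functions `a : Fin 3 → Fin d` with `a = a ∘ (j i⁻¹)`: all `d³` of them when `i = j`, and only the
`d` constant ones when `j i⁻¹` is the 3-cycle or its inverse.
-/

def maxEntVec (R I : Type*) [Semiring R] [DecidableEq I] : I × I → R :=
  fun p => if p.1 = p.2 then 1 else 0

theorem trace_kronecker_mul_vecMulVec_maxEntVec {R I : Type*} [CommSemiring R] [Fintype I]
    [DecidableEq I] (A B : Matrix I I R) :
    ((A ⊗ₖ B) * vecMulVec (maxEntVec R I) (maxEntVec R I)).trace = (Aᵀ * B).trace := by
  rw [trace_mul_comm, vecMulVec_mul, trace_vecMulVec]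
  simp [dotProduct, vecMul, maxEntVec, Fintype.sum_prod_type, trace, mul_apply]

theorem reindex_kpow_psiTilde (d t : ℕ) :
    Matrix.reindex (Equiv.arrowProdEquivProdArrow (Fin t) (fun _ => Fin d) (fun _ => Fin d))
      (Equiv.arrowProdEquivProdArrow (Fin t) (fun _ => Fin d) (fun _ => Fin d))
      (kpow (psiTilde d) t) =
      vecMulVec (maxEntVec ℂ (Fin t → Fin d)) (maxEntVec ℂ (Fin t → Fin d)) := by
  ext ⟨a, a'⟩ ⟨b, b'⟩
  simp only [reindex_apply, submatrix_apply, kpow, psiTilde, of_apply, vecMulVec_apply,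
    maxEntVec, Equiv.arrowProdEquivProdArrow, Equiv.coe_fn_symm_mk]
  rw [Finset.prod_mul_distrib, Finset.prod_boole, Finset.prod_boole]
  simp [funext_iff]

theorem eq_comp_finRotate_iff {I : Type*} {n : ℕ} {a : Fin (n + 1) → I} :
    a = a ∘ finRotate (n + 1) ↔ ∃ x, a = Function.const _ x := by
  refine ⟨fun h => ⟨a 0, funext fun k => ?_⟩, fun ⟨x, hx⟩ => hx ▸ rfl⟩
  induction k using Fin.induction with
  | zero => rfl
  | succ k ih =>
    calc a k.succ = a (finRotate _ k.castSucc) := by rw [finRotate_apply, Fin.coeSucc_eq_succ]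
      _ = a 0 := (congrFun h _).symm.trans ih

section PermOp

variable {I : Type*} [DecidableEq I] {t : ℕ}

theorem permOp_one : permOp I (1 : Equiv.Perm (Fin t)) = 1 := by
  ext b a
  simp [permOp, one_apply]

theorem transpose_permOp (σ : Equiv.Perm (Fin t)) : (permOp I σ)ᵀ = permOp I σ⁻¹ := by
  ext b a
  simp [permOp, eq_comm (a := a), Equiv.eq_comp_symm]

variable [Fintype I]

theorem permOp_mul (σ τ : Equiv.Perm (Fin t)) : permOp I σ * permOp I τ = permOp I (τ * σ) := by
  ext b a
  simp only [permOp, mul_apply, of_apply, mul_ite, mul_one, mul_zero, Finset.sum_ite_eq',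
    Finset.mem_univ, if_true, Equiv.Perm.coe_mul]
  rfl

theorem trace_permOp (σ : Equiv.Perm (Fin t)) :
    (permOp I σ).trace = (Finset.univ.filter fun a : Fin t → I => a = a ∘ σ).card := by
  simp [permOp, trace, Finset.sum_boole]

theorem trace_permOp_inv (σ : Equiv.Perm (Fin t)) :
    (permOp I σ⁻¹).trace = (permOp I σ).trace := by
  rw [← transpose_permOp, trace_transpose]

theorem trace_permOp_finRotate (n : ℕ) :
    (permOp I (finRotate (n + 1))).trace = Fintype.card I := by
  have : (Finset.univ.filter fun a : Fin (n + 1) → I => a = a ∘ finRotate (n + 1)) =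
      Finset.univ.map ⟨Function.const _, Function.const_injective⟩ := by
    ext a
    simp [eq_comp_finRotate_iff, eq_comm]
  rw [trace_permOp, this, Finset.card_map, Finset.card_univ]

end PermOp

theorem stmt_11_general (d : ℕ) (i j : Equiv.Perm (Fin 3))
    (hi : i = c3 ∨ i = c3⁻¹) (hj : j = c3 ∨ j = c3⁻¹) :
    ((permOp (Fin d) i ⊗ₖ permOp (Fin d) j) *
        Matrix.reindex (Equiv.arrowProdEquivProdArrow (Fin 3) (fun _ => Fin d) (fun _ => Fin d))
          (Equiv.arrowProdEquivProdArrow (Fin 3) (fun _ => Fin d) (fun _ => Fin d))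
          (kpow (psiTilde d) 3)).trace =
      if i = j then (d : ℂ) ^ 3 else (d : ℂ) := by
  rw [reindex_kpow_psiTilde, trace_kronecker_mul_vecMulVec_maxEntVec, transpose_permOp,
    permOp_mul]
  split_ifs with hij
  · simp [hij, permOp_one]
  · have hc : j * i⁻¹ = c3 ∨ j * i⁻¹ = c3⁻¹ := by
      rcases hi with rfl | rfl <;> rcases hj with rfl | rfl <;>
        first | exact absurd rfl hij | decide
    obtain hc | hc := hc <;> simp [hc, trace_permOp_inv, c3, trace_permOp_finRotate 2]

theorem stmt_11 (d : ℕ) (hd : 1 ≤ d) (i j : Equiv.Perm (Fin 3))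
    (hi : i = c3 ∨ i = c3⁻¹) (hj : j = c3 ∨ j = c3⁻¹) :
    ((permOp (Fin d) i ⊗ₖ permOp (Fin d) j) *
        Matrix.reindex (Equiv.arrowProdEquivProdArrow (Fin 3) (fun _ => Fin d) (fun _ => Fin d))
          (Equiv.arrowProdEquivProdArrow (Fin 3) (fun _ => Fin d) (fun _ => Fin d))
          (kpow (psiTilde d) 3)).trace =
      if i = j then (d : ℂ) ^ 3 else (d : ℂ) :=
  stmt_11_general d i j hi hj
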